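/- For every natural number n, it is not the case that G_{n+1} ≤ G_n. -/

import Mathlib

universe u

/-- Pre-games (as in the older Mathlib's `SetTheory.PGame`, since removed from Mathlib). -/
inductive SetTheory.PGame : Type (u + 1)
  | mk : ∀ α β : Type u, (α → SetTheory.PGame) → (β → SetTheory.PGame) → SetTheory.PGame

/-- The pre-game `0 = { | }` (as in the older Mathlib). -/
instance SetTheory.PGame.instZero : Zero SetTheory.PGame :=
  ⟨⟨PEmpty, PEmpty, PEmpty.elim, PEmpty.elim⟩⟩

/-- Combinatorial games over a poset `A` of atoms: either an atomic game `[a]` for an atom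
`a : A`, or a composite game `⟨L|R⟩` where `L` and `R` are nonempty families of games
(the left and right options). -/
inductive PoGame (A : Type u) : Type (u + 1) where
  | atom : A → PoGame A
  | mk : (xl xr : Type u) → (xl → PoGame A) → (xr → PoGame A) →
      Nonempty xl → Nonempty xr → PoGame A

namespace PoGame

variable {A : Type u}

/-- `G` is an atomic game. -/
def IsAtomic : PoGame A → Prop
  | atom _ => True
  | mk _ _ _ _ _ _ => False

/-- `G` is a left option of the game given as second argument. -/
def IsLeftOption (G : PoGame A) : PoGame A → Prop
  | atom _ => False
  | mk _ _ L _ _ _ => ∃ i, L i = G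

/-- `G` is a right option of the game given as second argument. -/
def IsRightOption (G : PoGame A) : PoGame A → Prop
  | atom _ => False
  | mk _ _ _ R _ _ => ∃ j, R j = G

section Order

variable [PartialOrder A]

mutual
  /-- `Le G H` is the relation `G ≤ H` on games over the poset `A`, defined by mutual
  recursion with `Lf` (the relation `G ⊲ H`): `G ≤ H` iff every left option `G^L`
  satisfies `G^L ⊲ H`, every right option `H^R` satisfies `G ⊲ H^R`, and if `G` or `H`
  is atomic then `G ⊲ H`. -/
  inductive Le : PoGame A → PoGame A → Prop
    | intro (G H : PoGame A)
        (hL : ∀ G', IsLeftOption G' G → Lf G' H)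
        (hR : ∀ H', IsRightOption H' H → Lf G H')
        (hA : IsAtomic G ∨ IsAtomic H → Lf G H) : Le G H

  /-- `Lf G H` is the relation `G ⊲ H` on games over the poset `A`: it holds iff some
  right option `G^R` satisfies `G^R ≤ H`, or some left option `H^L` satisfies `G ≤ H^L`,
  or `G = [a]` and `H = [b]` are atomic with `a ≤ b` in `A`. -/
  inductive Lf : PoGame A → PoGame A → Prop
    | rightOption (G H G' : PoGame A) (h : IsRightOption G' G) (hle : Le G' H) : Lf G H
    | leftOption (G H H' : PoGame A) (h : IsLeftOption H' H) (hle : Le G H') : Lf G H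
    | atom (a b : A) (hab : a ≤ b) : Lf (atom a) (atom b)
end

/-- Two games are equivalent if `G ≤ H` and `H ≤ G`. -/
def GEquiv (G H : PoGame A) : Prop := Le G H ∧ Le H G

/-- `G` is locally monotone if `G ≤ G^L` for every left option `G^L` and `G^R ≤ G` for
every right option `G^R`. -/
def LocallyMonotone (G : PoGame A) : Prop :=
  (∀ G', IsLeftOption G' G → Le G G') ∧ (∀ G', IsRightOption G' G → Le G' G)

/-- `G` is an option (left or right) of `H`. -/
def IsOption (G H : PoGame A) : Prop := IsLeftOption G H ∨ IsRightOption G H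

/-- `G` is a position of `H`: `H` itself, an option of `H`, an option of an option, etc. -/
def IsPosition (G H : PoGame A) : Prop := Relation.ReflTransGen IsOption G H

/-- `G` is monotone if every position of `G` is locally monotone. -/
def Monotone (G : PoGame A) : Prop := ∀ K, IsPosition K G → LocallyMonotone K

end Order

/-- The 5-element linearly ordered set `L5 = {-3, -2, -1, 0, 1}`. -/
abbrev L5 : Type := {a : ℤ // -3 ≤ a ∧ a ≤ 1}

/-- `G` has mean `C`: an atomic game `[a]` has mean `a`, and a composite game has mean `C`
iff every left option has mean `C + 1` and every right option has mean `C - 1`. -/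
def HasMean : PoGame L5 → ℤ → Prop
  | atom a, C => (a : ℤ) = C
  | mk _ _ L R _ _, C => (∀ i, HasMean (L i) (C + 1)) ∧ (∀ j, HasMean (R j) (C - 1))

/-- The game `⟨G | H⟩` with a single left option `G` and a single right option `H`. -/
def ofPair (G H : PoGame A) : PoGame A :=
  mk PUnit PUnit (fun _ => G) (fun _ => H) ⟨PUnit.unit⟩ ⟨PUnit.unit⟩

/-- `⋆ = ⟨-1 | -3⟩`. -/
def star : PoGame L5 := ofPair (atom ⟨-1, by norm_num⟩) (atom ⟨-3, by norm_num⟩)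

/-- `M(G) = ⟨1 | G⟩`. -/
def M (G : PoGame L5) : PoGame L5 := ofPair (atom ⟨1, by norm_num⟩) G

/-- `P(G) = ⟨G | -2⟩`. -/
def P (G : PoGame L5) : PoGame L5 := ofPair G (atom ⟨-2, by norm_num⟩)

/-- `P⋆(G) = ⟨G | ⋆⟩`. -/
def Pstar (G : PoGame L5) : PoGame L5 := ofPair G star

/-- `Pn n G = P G` if `n` is odd, `P⋆ G` if `n` is even. -/
def Pn (n : ℕ) (G : PoGame L5) : PoGame L5 := if Odd n then P G else Pstar G

/-- The sequence `G_0 = [0]`, `G_{n+1} = M (Pn n (G_n))`. -/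
def Gseq : ℕ → PoGame L5
  | 0 => atom ⟨0, by norm_num⟩
  | n + 1 => M (Pn n (Gseq n))

/-- The normal-play game obtained from a game over `L5` by replacing every atom by the
normal-play game `0 = { | }`, keeping the tree of left and right options. -/
def np : PoGame L5 → SetTheory.PGame.{0}
  | atom _ => 0
  | mk xl xr L R _ _ => SetTheory.PGame.mk xl xr (fun i => np (L i)) (fun j => np (R j))

end PoGame

/-!
For `m < k`, `G_k ≤ G_m` forces `G_k ⊲ P_{m-1} G_{m-1}`, that is `G_k ≤ G_{m-1}` (excluded by
induction on `m`) or `P_{k-1} G_{k-1} ≤ P_{m-1} G_{m-1}`. The latter forces `G_{k-1} ⊲ P_{m-1} G_{m-1}`,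
that is `G_{k-1} ≤ G_{m-1}` (excluded by induction) or `P_{k-2} G_{k-2} ≤ P_{m-1} G_{m-1}`. One of the
pairs `(k-1, m-1)`, `(k-2, m-1)` has opposite parities, and `P_i G_i ≤ P_j G_j` fails for those:
`⟨G | -2⟩ ≤ ⟨H | ⋆⟩` needs `-2 ≤ ⋆` (so `-2 ⊲ -3`) or `⟨G | -2⟩ ≤ -1` (so `G ⊲ -1`, which no `G_i`
satisfies, as its Right moves lead down to `G_0 = [0]`), while `⟨G | ⋆⟩ ≤ ⟨H | -2⟩` needs `⋆ ≤ -2`,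
so `-1 ⊲ -2`. The base case `G_k ≤ [0]` fails because `1 ⊲ 0` fails.
-/

namespace PoGame

section Order

variable {A : Type u} [PartialOrder A] {G G' H H' L R L' R' : PoGame A} {a b : A}

theorem Le.lf_of_isLeftOption (h : Le G H) (hG : IsLeftOption G' G) : Lf G' H := by
  cases h with
  | intro _ _ hL _ _ => exact hL G' hG

theorem Le.lf_of_isRightOption (h : Le G H) (hH : IsRightOption H' H) : Lf G H' := by
  cases h with
  | intro _ _ _ hR _ => exact hR H' hH

theorem Le.lf_ofPair_left (h : Le (ofPair L R) H) : Lf L H :=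
  h.lf_of_isLeftOption ⟨PUnit.unit, rfl⟩

theorem Le.lf_ofPair_right (h : Le G (ofPair L R)) : Lf G R :=
  h.lf_of_isRightOption ⟨PUnit.unit, rfl⟩

theorem lf_atom_atom_iff : Lf (atom a) (atom b) ↔ a ≤ b := by
  refine ⟨fun h => ?_, Lf.atom a b⟩
  cases h with
  | rightOption _ _ _ h _ => exact h.elim
  | leftOption _ _ _ h _ => exact h.elim
  | atom _ _ hab => exact hab

theorem lf_ofPair_atom_iff : Lf (ofPair L R) (atom b) ↔ Le R (atom b) := by
  refine ⟨fun h => ?_, Lf.rightOption _ _ _ ⟨PUnit.unit, rfl⟩⟩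
  cases h with
  | rightOption _ _ _ h hle => obtain ⟨_, rfl⟩ := h; exact hle
  | leftOption _ _ _ h _ => exact h.elim

theorem lf_ofPair_ofPair_iff :
    Lf (ofPair L R) (ofPair L' R') ↔ Le R (ofPair L' R') ∨ Le (ofPair L R) L' := by
  refine ⟨fun h => ?_, ?_⟩
  · cases h with
    | rightOption _ _ _ h hle => obtain ⟨_, rfl⟩ := h; exact Or.inl hle
    | leftOption _ _ _ h hle => obtain ⟨_, rfl⟩ := h; exact Or.inr hle
  · rintro (h | h)
    · exact Lf.rightOption _ _ _ ⟨PUnit.unit, rfl⟩ h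
    · exact Lf.leftOption _ _ _ ⟨PUnit.unit, rfl⟩ h

end Order

section L5

variable {G : PoGame L5} {k m n : ℕ}

theorem pn_of_odd (hn : Odd n) (G : PoGame L5) : Pn n G = P G := if_pos hn

theorem pn_of_not_odd (hn : ¬ Odd n) (G : PoGame L5) : Pn n G = Pstar G := if_neg hn

theorem pn_eq_ofPair (n : ℕ) (G : PoGame L5) : ∃ R, Pn n G = ofPair G R := by
  by_cases hn : Odd n
  · exact ⟨_, pn_of_odd hn G⟩
  · exact ⟨_, pn_of_not_odd hn G⟩

theorem Le.lf_of_pn_le {H : PoGame L5} (h : Le (Pn n G) H) : Lf G H := by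
  obtain ⟨R, hR⟩ := pn_eq_ofPair n G
  exact (hR ▸ h).lf_ofPair_left

theorem not_atom_neg_two_le_star : ¬ Le (atom ⟨-2, by norm_num⟩) star := fun h => by
  have := lf_atom_atom_iff.1 h.lf_ofPair_right
  simp at this

theorem not_star_le_atom_neg_two : ¬ Le star (atom ⟨-2, by norm_num⟩) := fun h => by
  have := lf_atom_atom_iff.1 h.lf_ofPair_left
  simp at this

theorem not_gseq_lf_atom_neg_one : ∀ k, ¬ Lf (Gseq k) (atom ⟨-1, by norm_num⟩)
  | 0, h => by simp [Gseq, lf_atom_atom_iff] at h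
  | k + 1, h => by
    rw [Gseq, M, lf_ofPair_atom_iff] at h
    exact not_gseq_lf_atom_neg_one k h.lf_of_pn_le

theorem not_p_le_pstar (hG : ¬ Lf G (atom ⟨-1, by norm_num⟩)) (H : PoGame L5) :
    ¬ Le (P G) (Pstar H) := fun h => by
  rcases lf_ofPair_ofPair_iff.1 h.lf_ofPair_right with h | h
  · exact not_atom_neg_two_le_star h
  · exact hG h.lf_ofPair_left

theorem not_pstar_le_p (G H : PoGame L5) : ¬ Le (Pstar G) (P H) := fun h =>
  not_star_le_atom_neg_two (lf_ofPair_atom_iff.1 h.lf_ofPair_right)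

theorem not_pn_gseq_le_pn_of_odd_iff_not_odd (hkm : Odd k ↔ ¬ Odd m) (H : PoGame L5) :
    ¬ Le (Pn k (Gseq k)) (Pn m H) := by
  by_cases hk : Odd k
  · rw [pn_of_odd hk, pn_of_not_odd (hkm.1 hk)]
    exact not_p_le_pstar (not_gseq_lf_atom_neg_one k) H
  · rw [pn_of_not_odd hk, pn_of_odd (by tauto)]
    exact not_pstar_le_p _ H

theorem not_pn_gseq_le_pn_gseq (hmk : m < k) (h : ¬ Le (Gseq k) (Gseq m)) :
    ¬ Le (Pn k (Gseq k)) (Pn m (Gseq m)) := by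
  by_cases hkm : Odd k ↔ ¬ Odd m
  · exact not_pn_gseq_le_pn_of_odd_iff_not_odd hkm _
  obtain ⟨l, rfl⟩ : ∃ l, k = l + 1 := ⟨k - 1, by omega⟩
  obtain ⟨R, hR⟩ := pn_eq_ofPair m (Gseq m)
  intro hle
  have hlf := hle.lf_of_pn_le
  rw [hR, Gseq, M, lf_ofPair_ofPair_iff, ← hR] at hlf
  rcases hlf with hlf | hlf
  · exact not_pn_gseq_le_pn_of_odd_iff_not_odd (by rw [Nat.odd_add_one] at hkm; tauto) _ hlf
  · exact h hlf

theorem not_gseq_le_gseq_of_lt (hmk : m < k) : ¬ Le (Gseq k) (Gseq m) := by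
  induction m generalizing k with
  | zero =>
    obtain ⟨l, rfl⟩ : ∃ l, k = l + 1 := ⟨k - 1, by omega⟩
    intro h
    have := lf_atom_atom_iff.1 h.lf_ofPair_left
    simp at this
  | succ j ih =>
    obtain ⟨i, rfl⟩ : ∃ i, k = i + 1 := ⟨k - 1, by omega⟩
    obtain ⟨R, hR⟩ := pn_eq_ofPair j (Gseq j)
    intro h
    have hlf := h.lf_ofPair_right
    rw [Gseq, M, hR, lf_ofPair_ofPair_iff, ← hR] at hlf
    rcases hlf with hlf | hlf
    · exact not_pn_gseq_le_pn_gseq (by omega) (ih (by omega)) hlf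
    · exact ih (k := i + 1) (by omega) hlf

end L5

end PoGame

open PoGame in
/-- For every natural number `n`, it is not the case that `G_{n+1} ≤ G_n`. -/
theorem stmt_13 (n : ℕ) : ¬ Le (Gseq (n + 1)) (Gseq n) :=
  not_gseq_le_gseq_of_lt n.lt_succ_self
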